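/- arXiv:quant-ph/0607092 — 5 statements merged into one kernel-verified Lean document; each statement's English description precedes it below -/
import Mathlib

section
/- Let m ≥ 1 be an integer. For every a ∈ Fin m and every n ≥ 1, (P_a · C_G)^n = p_n · |a⟩⟨s| + q_n · P_a, where p_n = (2/√m)·(2/m − 1)^(n−1) and q_n = −(2/m − 1)^(n−1). -/
noncomputable section

open scoped BigOperators

/-- The complex Euclidean space `ℂ^m`. -/
abbrev H (m : ℕ) := EuclideanSpace ℂ (Fin m)

/-- The computational orthonormal basis vector `|a⟩`. -/
def ket {m : ℕ} (a : Fin m) : H m := EuclideanSpace.single a 1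

/-- The uniform superposition `|s⟩ = (1/√m) Σ_a |a⟩`. -/
def ketS (m : ℕ) : H m := ((Real.sqrt m : ℂ))⁻¹ • ∑ a : Fin m, ket a

/-- The outer product `|x⟩⟨y|`, i.e. `v ↦ ⟪y, v⟫ • x`. -/
def outer {m : ℕ} (x y : H m) : H m →L[ℂ] H m := (innerSL ℂ y).smulRight x

/-- The projection `P_a = |a⟩⟨a|`. -/
def P {m : ℕ} (a : Fin m) : H m →L[ℂ] H m := outer (ket a) (ket a)

/-- The Grover coin `C_G = 2|s⟩⟨s| - 1`. -/
def groverC (m : ℕ) : H m →L[ℂ] H m := (2 : ℂ) • outer (ketS m) (ketS m) - 1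

/-! Since `C_G` is self-adjoint, `P_a C_G = |a⟩⟨a| C_G = |a⟩⟨C_G a|` is a rank-one operator, and
`(|x⟩⟨y|)^(n+1) = ⟨y|x⟩^n |x⟩⟨y|`. Here `C_G |a⟩ = (2/√m)|s⟩ - |a⟩`, so
`⟨C_G a|a⟩ = 2/m - 1` and `|a⟩⟨C_G a| = (2/√m)|a⟩⟨s| - P_a`. -/

open InnerProductSpace ContinuousLinearMap

section RankOne

variable {𝕜 E : Type*} [RCLike 𝕜] [NormedAddCommGroup E] [InnerProductSpace 𝕜 E]

theorem rankOne_pow_succ (x y : E) (n : ℕ) :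
    rankOne 𝕜 x y ^ (n + 1) = inner 𝕜 y x ^ n • rankOne 𝕜 x y := by
  induction n with
  | zero => simp
  | succ n ih =>
    rw [pow_succ, ih, smul_mul_assoc, mul_def, rankOne_comp_rankOne, smul_smul, pow_succ]

theorem rankOne_mul_of_isSelfAdjoint [CompleteSpace E] (x y : E) {T : E →L[𝕜] E}
    (hT : IsSelfAdjoint T) : rankOne 𝕜 x y * T = rankOne 𝕜 x (T y) := by
  rw [mul_def, rankOne_comp, hT.adjoint_eq]

end RankOne

theorem outer_eq_rankOne {m : ℕ} (x y : H m) : outer x y = rankOne ℂ x y := rfl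

theorem inner_ketS_ket {m : ℕ} (a : Fin m) :
    inner ℂ (ketS m) (ket a) = ((Real.sqrt m)⁻¹ : ℝ) := by
  simp [ketS, ket, EuclideanSpace.inner_single_left]

theorem isSelfAdjoint_groverC (m : ℕ) : IsSelfAdjoint (groverC m) := by
  rw [isSelfAdjoint_iff, star_eq_adjoint, groverC, map_sub, map_smulₛₗ, outer_eq_rankOne,
    adjoint_rankOne, adjoint_one, map_ofNat]

theorem groverC_ket {m : ℕ} (a : Fin m) :
    groverC m (ket a) = ((2 / Real.sqrt m : ℝ) : ℂ) • ketS m - ket a := by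
  rw [groverC, sub_apply, smul_apply, outer_eq_rankOne, rankOne_apply, inner_ketS_ket,
    one_apply_eq_self, smul_smul]
  push_cast
  module

theorem inner_groverC_ket_ket {m : ℕ} (a : Fin m) :
    inner ℂ (groverC m (ket a)) (ket a) = ((2 / m - 1 : ℝ) : ℂ) := by
  have hnorm : ‖ket a‖ = 1 := by simp [ket]
  have hsqrt : 2 / Real.sqrt m * (Real.sqrt m)⁻¹ = 2 / m := by
    rw [div_eq_mul_inv, mul_assoc, ← mul_inv, Real.mul_self_sqrt m.cast_nonneg, div_eq_mul_inv]
  rw [groverC_ket, inner_sub_left, inner_smul_left, Complex.conj_ofReal, inner_ketS_ket,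
    ← Complex.ofReal_mul, hsqrt, inner_self_eq_norm_sq_to_K, hnorm]
  push_cast
  ring

theorem P_mul_groverC {m : ℕ} (a : Fin m) :
    P a * groverC m = outer (ket a) (groverC m (ket a)) :=
  rankOne_mul_of_isSelfAdjoint _ _ (isSelfAdjoint_groverC m)

theorem grover_proj_pow_general (m : ℕ) (a : Fin m) (n : ℕ) (hn : 1 ≤ n) :
    (P a * groverC m) ^ n
      = ((2 / Real.sqrt m * (2 / (m : ℝ) - 1) ^ (n - 1) : ℝ) : ℂ) • outer (ket a) (ketS m)
        + ((-((2 / (m : ℝ) - 1) ^ (n - 1)) : ℝ) : ℂ) • P a := by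
  obtain ⟨k, rfl⟩ := Nat.exists_eq_add_of_le' hn
  rw [P_mul_groverC, outer_eq_rankOne, rankOne_pow_succ, inner_groverC_ket_ket, groverC_ket,
    map_sub, map_smulₛₗ, Complex.conj_ofReal, Nat.add_sub_cancel, P, outer_eq_rankOne,
    outer_eq_rankOne]
  push_cast
  module

/-- Lemma 1 of the paper: `(P_a C_G)^n = p_n |a⟩⟨s| + q_n P_a` with
`p_n = (2/√m)(2/m - 1)^(n-1)` and `q_n = -(2/m - 1)^(n-1)`. -/
theorem grover_proj_pow (m : ℕ) (hm : 1 ≤ m) (a : Fin m) (n : ℕ) (hn : 1 ≤ n) :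
    (P a * groverC m) ^ n
      = ((2 / Real.sqrt m * (2 / (m : ℝ) - 1) ^ (n - 1) : ℝ) : ℂ) • outer (ket a) (ketS m)
        + ((-((2 / (m : ℝ) - 1) ^ (n - 1)) : ℝ) : ℂ) • P a :=
  grover_proj_pow_general m a n hn
end
end

section
/- Let d = 2, m = 4, and take the Grover coin values r = −1/2, t = 1/2. Then for every n ≥ 1 and every x ∈ ℤ², the averaged probability distribution of the quantum walk with random phase shifts satisfies |κ|² · Σ_{a∈(Fin 4)^n, e(a_1)+⋯+e(a_n) = x} |Ξ(a)|² = (1/4^n) · #{ a ∈ (Fin 4)^n : e(a_1)+⋯+e(a_n) = x }, where κ = (r−t)/2 + 2t; i.e. the mean distribution coincides with that of the memoryless classical random walk on ℤ² with equal probability 1/4 for each direction. -/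
noncomputable section

open scoped BigOperators

/-- `Ξ(a_1, …, a_n) = ∏_{j=1}^{n-1} (t + (r - t) δ_{a_j, a_{j+1}})` (empty product is 1). -/
def Xi (m n : ℕ) (r t : ℂ) (a : Fin n → Fin m) : ℂ :=
  ∏ j : Fin n, if h : (j : ℕ) + 1 < n then
    (t + (r - t) * (if a j = a ⟨(j : ℕ) + 1, h⟩ then 1 else 0)) else 1

/-- The `2d` signed standard basis vectors of `ℤ^d`: `e(2k) = u_k`, `e(2k+1) = -u_k`. -/
def eZ (d : ℕ) (a : Fin (2 * d)) : Fin d → ℤ :=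
  Pi.single ⟨(a : ℕ) / 2, by have := a.2; omega⟩ (if (a : ℕ) % 2 = 0 then 1 else -1)

/-- Each of the `n - 1` factors of `Ξ` is `r` or `t`, so for `|r| = |t|` (as for the Grover coin
with `m = 4`) all paths carry the same weight and the walk's memory is invisible to `|Ξ|`. -/
theorem norm_Xi_of_norm_eq {m n : ℕ} {r t : ℂ} {c : ℝ} (hr : ‖r‖ = c) (ht : ‖t‖ = c)
    (a : Fin n → Fin m) : ‖Xi m n r t a‖ = c ^ (n - 1) := by
  have hfactor : ∀ j : Fin n,
      ‖if h : (j : ℕ) + 1 < n then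
          (t + (r - t) * (if a j = a ⟨(j : ℕ) + 1, h⟩ then 1 else 0)) else 1‖
        = if (j : ℕ) + 1 < n then c else 1 := by
    intro j
    split_ifs <;> simp [hr, ht]
  have hrange : (Finset.range n).filter (fun j => j + 1 < n) = Finset.range (n - 1) := by
    ext j
    simp only [Finset.mem_filter, Finset.mem_range]
    omega
  rw [Xi, norm_prod, Finset.prod_congr rfl fun j _ => hfactor j,
    Fin.prod_univ_eq_prod_range (fun j => if j + 1 < n then c else 1), Finset.prod_ite,
    hrange, Finset.prod_const, Finset.card_range, Finset.prod_const_one, mul_one]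

/-- Eq. (31) of the paper: for `d = 2` with the Grover coin (`r = -1/2`, `t = 1/2`), the
phase-averaged distribution of the quantum walk with random phase shifts coincides with
the memoryless classical random walk on `ℤ²` taking each of the 4 directions with
probability `1/4`. -/
theorem mean_probability_dim_two_classical (n : ℕ) (hn : 1 ≤ n) (x : Fin 2 → ℤ) :
    ‖(((-1 : ℂ) / 2) - 1 / 2) / 2 + 2 * ((1 : ℂ) / 2)‖ ^ 2 *
        ∑ a ∈ Finset.univ.filter
            (fun a : Fin n → Fin (2 * 2) => (∑ j : Fin n, eZ 2 (a j)) = x),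
          ‖Xi (2 * 2) n (-1 / 2) (1 / 2) a‖ ^ 2
      = (1 / 4 ^ n) *
          (Finset.univ.filter
            (fun a : Fin n → Fin (2 * 2) => (∑ j : Fin n, eZ 2 (a j)) = x)).card := by
  have hκ : ‖(((-1 : ℂ) / 2) - 1 / 2) / 2 + 2 * ((1 : ℂ) / 2)‖ = 1 / 2 := by norm_num
  have hXi : ∀ a : Fin n → Fin (2 * 2), ‖Xi (2 * 2) n (-1 / 2) (1 / 2) a‖ = (1 / 2) ^ (n - 1) :=
    norm_Xi_of_norm_eq (by norm_num) (by norm_num)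
  obtain ⟨k, rfl⟩ : ∃ k, n = k + 1 := ⟨n - 1, by omega⟩
  simp only [hκ, hXi, Finset.sum_const, nsmul_eq_mul, Nat.add_sub_cancel]
  rw [← pow_mul, mul_comm k 2, pow_mul, show ((1 : ℝ) / 2) ^ 2 = 1 / 4 by norm_num, one_div_pow]
  ring
end
end

section
/- Let m ≥ 1 and r, t ∈ ℂ satisfy the unitarity constraints |r|² + (m−1)|t|² = 1 and (m−2)|t|² + conj(r)·t + r·conj(t) = 0. Then for every n ≥ 1, Σ_{a∈(Fin m)^n} |Ξ(a)|² = m, where Ξ(a_1,…,a_n) = ∏_{j=1}^{n−1} (t + (r − t)·δ_{a_j,a_{j+1}}). -/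
noncomputable section

open scoped BigOperators ComplexConjugate

/-! The squared moduli of the entries of the coin form a column-stochastic kernel `w`, and
`|Ξ(a)|²` is the weight `∏ w (a j) (a (j+1))` of the path `a`. Summing out the first vertex of a
path multiplies by a column sum, i.e. by `1`, so the total weight of the paths with `n` vertices
equals that of the paths with one vertex, namely `m`. -/

theorem sum_prod_adjacent_eq_card {α R : Type*} [Fintype α] [CommSemiring R]
    (w : α → α → R) (hw : ∀ y, ∑ x, w x y = 1) (k : ℕ) :
    ∑ a : Fin (k + 1) → α, ∏ j : Fin k, w (a j.castSucc) (a j.succ) = Fintype.card α := by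
  induction k with
  | zero => simp
  | succ k ih =>
    rw [← (Fin.consEquiv fun _ => α).sum_comp, Fintype.sum_prod_type_right]
    simp only [Fin.consEquiv_apply, Fin.prod_univ_succ, Fin.castSucc_zero, Fin.cons_zero,
      ← Fin.succ_castSucc, Fin.cons_succ, ← Finset.sum_mul, hw, one_mul, ih]

theorem sum_ite_eq_add_card_mul {α R : Type*} [Fintype α] [DecidableEq α] [CommRing R]
    (y : α) (d e : R) :
    ∑ x, (if x = y then d else e) = d + (Fintype.card α - 1) * e := by
  rw [Fintype.sum_eq_add_sum_compl y, if_pos rfl,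
    Finset.sum_congr rfl fun x hx => if_neg (by simpa using hx),
    Finset.sum_const, Finset.card_compl, Finset.card_singleton, nsmul_eq_mul,
    Nat.cast_sub (Fintype.card_pos_iff.mpr ⟨y⟩), Nat.cast_one]

theorem Xi_succ (m k : ℕ) (r t : ℂ) (a : Fin (k + 1) → Fin m) :
    Xi m (k + 1) r t a = ∏ j : Fin k, if a j.castSucc = a j.succ then r else t := by
  rw [Xi, Fin.prod_univ_castSucc]
  simp only [Fin.val_castSucc, Fin.val_last, lt_self_iff_false, dif_neg, not_false_eq_true,
    mul_one]
  refine Finset.prod_congr rfl fun j _ => ?_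
  rw [dif_pos (by omega)]
  change (t + (r - t) * if a j.castSucc = a j.succ then 1 else 0) = _
  split_ifs <;> ring

theorem sum_Xi_sq_general (m : ℕ) (r t : ℂ)
    (h1 : ‖r‖ ^ 2 + ((m : ℝ) - 1) * ‖t‖ ^ 2 = 1)
    (n : ℕ) (hn : 1 ≤ n) :
    ∑ a : Fin n → Fin m, ‖Xi m n r t a‖ ^ 2 = m := by
  obtain ⟨k, rfl⟩ := Nat.exists_eq_add_of_le' hn
  have hcol (y : Fin m) : ∑ x, ‖if x = y then r else t‖ ^ 2 = 1 := by
    simpa only [apply_ite (‖·‖ ^ 2), sum_ite_eq_add_card_mul, Fintype.card_fin] using h1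
  simpa only [Xi_succ, norm_prod, Finset.prod_pow, Fintype.card_fin] using
    sum_prod_adjacent_eq_card (fun x y : Fin m => ‖if x = y then r else t‖ ^ 2) hcol k

/-- Under the unitarity constraints on the generalized Grover coin `G_{r,t}`, the total
incoherent weight of all `n`-step paths is `Σ_a |Ξ(a)|² = m`. -/
theorem sum_Xi_sq (m : ℕ) (hm : 1 ≤ m) (r t : ℂ)
    (h1 : ‖r‖ ^ 2 + ((m : ℝ) - 1) * ‖t‖ ^ 2 = 1)
    (h2 : ((m : ℂ) - 2) * ((‖t‖ ^ 2 : ℝ) : ℂ) + conj r * t + r * conj t = 0)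
    (n : ℕ) (hn : 1 ≤ n) :
    ∑ a : Fin n → Fin m, ‖Xi m n r t a‖ ^ 2 = m :=
  sum_Xi_sq_general m r t h1 n hn
end
end

section
/- Let d ≥ 1, m = 2d, and r, t ∈ ℂ satisfy the unitarity constraints |r|² + (m−1)|t|² = 1 and (m−2)|t|² + conj(r)·t + r·conj(t) = 0. Then the averaged probability distribution of the n-step quantum walk with random phase shifts is normalized: K · Σ_{a∈(Fin m)^n} |Ξ(a)|² = 1 for every n ≥ 1, where K = |(r−t)/√m + √m·t|² and Ξ(a_1,…,a_n) = ∏_{j=1}^{n−1} (t + (r − t)·δ_{a_j,a_{j+1}}). Equivalently, Σ_{x∈ℤ^d} K·Σ_{a∈(Fin m)^n, e(a_1)+⋯+e(a_n)=x} |Ξ(a)|² = 1. -/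
/-!
With `w i k = |r|²` for `i = k` and `|t|²` otherwise, `|Ξ(a)|² = ∏ⱼ w aⱼ aⱼ₊₁`, so
`Σₐ |Ξ(a)|²` is a sum over chains of a transfer matrix `w` whose column sums are
`|r|² + (m-1)|t|² = 1`; summing out one endpoint at a time leaves `m`. On the other side,
`(r - t)/√m + √m t = (r + (m-1) t)/√m`, and the two unitarity constraints give
`|r + (m-1) t|² = 1`, so `K = 1/m`. The lattice form only regroups the sum by `Σⱼ e(aⱼ)`.
-/

noncomputable section

open scoped BigOperators ComplexConjugate

open Finset

theorem sum_prod_chain_eq {ι R : Type*} [Fintype ι] [CommSemiring R] (c : ι → ι → R) (S : R)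
    (hcol : ∀ k, ∑ i, c i k = S) (N : ℕ) :
    ∑ a : Fin (N + 1) → ι, ∏ j : Fin N, c (a j.castSucc) (a j.succ) = Fintype.card ι * S ^ N := by
  induction N with
  | zero => simp
  | succ N ih =>
    rw [← (Fin.consEquiv fun _ : Fin (N + 2) => ι).sum_comp, Fintype.sum_prod_type]
    have hcons : ∀ (x : ι) (b : Fin (N + 1) → ι),
        ∏ j : Fin (N + 1), c ((Fin.cons x b : Fin (N + 2) → ι) j.castSucc)
            ((Fin.cons x b : Fin (N + 2) → ι) j.succ)
          = c x (b 0) * ∏ j : Fin N, c (b j.castSucc) (b j.succ) := by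
      intro x b
      simp [Fin.prod_univ_succ]
    simp only [Fin.consEquiv_apply, hcons]
    rw [sum_comm]
    simp_rw [← sum_mul, hcol, ← mul_sum, ih]
    ring

theorem sum_ite_eq_add_card_sub_one_mul {ι R : Type*} [Fintype ι] [DecidableEq ι] [CommRing R]
    (k : ι) (a b : R) :
    ∑ i, (if i = k then a else b) = a + ((Fintype.card ι : R) - 1) * b := by
  have hsplit : ∀ i, (if i = k then a else b) = b + if i = k then a - b else 0 := by
    intro i; split_ifs <;> ring
  simp only [hsplit, sum_add_distrib, sum_const, sum_ite_eq', mem_univ, if_true, card_univ,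
    nsmul_eq_mul]
  ring

theorem norm_Xi_sq (m N : ℕ) (r t : ℂ) (a : Fin (N + 1) → Fin m) :
    ‖Xi m (N + 1) r t a‖ ^ 2 =
      ∏ j : Fin N, if a j.castSucc = a j.succ then ‖r‖ ^ 2 else ‖t‖ ^ 2 := by
  rw [Xi, norm_prod, ← prod_pow, Fin.prod_univ_castSucc, dif_neg (by simp), norm_one, one_pow,
    mul_one]
  refine prod_congr rfl fun j _ => ?_
  rw [dif_pos (by simp)]
  change ‖t + (r - t) * if a j.castSucc = a j.succ then 1 else 0‖ ^ 2 = _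
  split_ifs <;> simp

theorem sum_norm_Xi_sq (m N : ℕ) (r t : ℂ) (h1 : ‖r‖ ^ 2 + ((m : ℝ) - 1) * ‖t‖ ^ 2 = 1) :
    ∑ a : Fin (N + 1) → Fin m, ‖Xi m (N + 1) r t a‖ ^ 2 = m := by
  simp only [norm_Xi_sq]
  rw [sum_prod_chain_eq (fun i k => if i = k then ‖r‖ ^ 2 else ‖t‖ ^ 2) 1
    (fun k => by rw [sum_ite_eq_add_card_sub_one_mul, Fintype.card_fin, h1])]
  simp

theorem norm_add_mul_sq_eq_one (m : ℕ) (r t : ℂ) (h1 : ‖r‖ ^ 2 + ((m : ℝ) - 1) * ‖t‖ ^ 2 = 1)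
    (h2 : ((m : ℂ) - 2) * ((‖t‖ ^ 2 : ℝ) : ℂ) + conj r * t + r * conj t = 0) :
    ‖r + ((m : ℂ) - 1) * t‖ ^ 2 = 1 := by
  have h1C : r * conj r + ((m : ℂ) - 1) * (t * conj t) = 1 := by
    rw [Complex.mul_conj', Complex.mul_conj']
    exact_mod_cast h1
  rw [Complex.ofReal_pow, ← Complex.mul_conj'] at h2
  apply Complex.ofReal_injective
  rw [Complex.ofReal_pow, ← Complex.mul_conj', map_add, map_mul, map_sub, map_natCast, map_one,
    Complex.ofReal_one]
  linear_combination h1C + ((m : ℂ) - 1) * h2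

theorem norm_div_sqrt_add_sqrt_mul_sq (m : ℕ) (hm : 0 < m) (r t : ℂ) :
    ‖(r - t) / (Real.sqrt m : ℂ) + (Real.sqrt m : ℂ) * t‖ ^ 2 =
      ‖r + ((m : ℂ) - 1) * t‖ ^ 2 / m := by
  have hsqrt : (Real.sqrt m : ℂ) ^ 2 = m := by
    rw [← Complex.ofReal_pow, Real.sq_sqrt m.cast_nonneg, Complex.ofReal_natCast]
  have hsqrt0 : (Real.sqrt m : ℂ) ≠ 0 := by
    exact_mod_cast (Real.sqrt_pos.mpr (Nat.cast_pos.mpr hm)).ne'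
  have hcombine : (r - t) / (Real.sqrt m : ℂ) + (Real.sqrt m : ℂ) * t =
      (r + ((m : ℂ) - 1) * t) / (Real.sqrt m : ℂ) := by
    field_simp
    linear_combination t * hsqrt
  rw [hcombine, norm_div, div_pow, Complex.norm_real, Real.norm_eq_abs, sq_abs,
    Real.sq_sqrt m.cast_nonneg]

theorem tsum_sum_fiberwise {α β M : Type*} [Fintype α] [DecidableEq β] [AddCommMonoid M]
    [TopologicalSpace M] [T2Space M] (f : α → β) (g : α → M) :
    ∑' x : β, ∑ a ∈ univ.filter (fun a => f a = x), g a = ∑ a, g a := by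
  have hmaps : ∀ a ∈ (univ : Finset α), f a ∈ univ.image f := fun a _ =>
    mem_image_of_mem f (mem_univ a)
  have hempty : ∀ x ∉ univ.image f, ∑ a ∈ univ.filter (fun a => f a = x), g a = 0 :=
    fun x hx => sum_eq_zero fun a ha => absurd ((mem_filter.mp ha).2 ▸ hmaps a (mem_univ a)) hx
  rw [tsum_eq_sum hempty, sum_fiberwise_of_maps_to hmaps]

/-- Eq. (32) of the paper: the phase-averaged probability distribution of the `n`-step
quantum walk with random phase shifts is normalized:
`K Σ_a |Ξ(a)|² = 1`, equivalently `Σ_{x ∈ ℤ^d} K Σ_{a ≡ x} |Ξ(a)|² = 1`. -/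
theorem mean_probability_normalized (d : ℕ) (hd : 1 ≤ d) (r t : ℂ)
    (h1 : ‖r‖ ^ 2 + (((2 * d : ℕ) : ℝ) - 1) * ‖t‖ ^ 2 = 1)
    (h2 : (((2 * d : ℕ) : ℂ) - 2) * ((‖t‖ ^ 2 : ℝ) : ℂ) + conj r * t + r * conj t = 0)
    (n : ℕ) (hn : 1 ≤ n) :
    ‖(r - t) / (Real.sqrt (2 * d) : ℂ) + (Real.sqrt (2 * d) : ℂ) * t‖ ^ 2 *
        ∑ a : Fin n → Fin (2 * d), ‖Xi (2 * d) n r t a‖ ^ 2 = 1 ∧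
      ∑' x : Fin d → ℤ,
        (‖(r - t) / (Real.sqrt (2 * d) : ℂ) + (Real.sqrt (2 * d) : ℂ) * t‖ ^ 2 *
          ∑ a ∈ Finset.univ.filter
              (fun a : Fin n → Fin (2 * d) => (∑ j : Fin n, eZ d (a j)) = x),
            ‖Xi (2 * d) n r t a‖ ^ 2) = 1 := by
  obtain ⟨N, rfl⟩ : ∃ N, n = N + 1 := ⟨n - 1, by omega⟩
  have hm : 0 < 2 * d := by omega
  have hcast : (2 * d : ℝ) = ((2 * d : ℕ) : ℝ) := by push_cast; rfl
  have htotal : ‖(r - t) / (Real.sqrt (2 * d) : ℂ) + (Real.sqrt (2 * d) : ℂ) * t‖ ^ 2 *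
      ∑ a : Fin (N + 1) → Fin (2 * d), ‖Xi (2 * d) (N + 1) r t a‖ ^ 2 = 1 := by
    rw [hcast, norm_div_sqrt_add_sqrt_mul_sq _ hm, norm_add_mul_sq_eq_one _ r t h1 h2,
      sum_norm_Xi_sq _ N r t h1, one_div_mul_cancel (by positivity)]
  refine ⟨htotal, ?_⟩
  rw [tsum_mul_left, tsum_sum_fiberwise, htotal]
end
end

section
/- Let d ≥ 1, m = 2d, and r, t ∈ ℂ satisfy the unitarity constraints |r|² + (m−1)|t|² = 1 and (m−2)|t|² + conj(r)·t + r·conj(t) = 0, together with |r| = |t|. Then either m = 2, |r| = 1/√2 and Re(conj(r)·t) = 0 (i.e. the phases of r and t differ by π/2 mod π), or m = 4, |r| = 1/2 and t = −r. -/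
noncomputable section

open scoped ComplexConjugate

/-!
Since `|r| = |t|`, the first constraint reads `m |t|² = 1` and the real part of the second reads
`(m - 2) |t|² + 2 Re(r̄ t) = 0`. As `|Re(r̄ t)| ≤ |r| |t| = |t|²`, this forces `m ≤ 4`, so `m = 2` or
`m = 4`. For `m = 2` the second constraint says `Re(r̄ t) = 0`; for `m = 4` it says
`Re(r̄ t) = -|r| |t|`, the equality case of the bound, and then `|r + t|² = 0`.
-/

namespace Complex

theorem abs_re_conj_mul_le (r t : ℂ) : |(conj r * t).re| ≤ ‖r‖ * ‖t‖ := by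
  simpa only [norm_mul, norm_conj] using abs_re_le_norm (conj r * t)

theorem norm_add_sq_eq_re_conj_mul (r t : ℂ) :
    ‖r + t‖ ^ 2 = ‖r‖ ^ 2 + ‖t‖ ^ 2 + 2 * (conj r * t).re := by
  rw [norm_add_sq_real, Complex.inner, mul_comm t]
  ring

theorem eq_neg_of_re_conj_mul_eq_neg {r t : ℂ} (hrt : ‖r‖ = ‖t‖)
    (h : (conj r * t).re = -‖t‖ ^ 2) : t = -r := by
  have : ‖r + t‖ ^ 2 = 0 := by
    rw [norm_add_sq_eq_re_conj_mul, h, hrt]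
    ring
  rw [sq_eq_zero_iff, norm_eq_zero] at this
  exact eq_neg_of_add_eq_zero_right this

end Complex

open Complex in
theorem grover_unitarity_re {m : ℕ} {r t : ℂ}
    (h : ((m : ℂ) - 2) * ((‖t‖ ^ 2 : ℝ) : ℂ) + conj r * t + r * conj t = 0) :
    ((m : ℝ) - 2) * ‖t‖ ^ 2 + 2 * (conj r * t).re = 0 := by
  have hre := congrArg re h
  simp only [add_re, mul_re, sub_re, ofReal_re, ofReal_im, natCast_re, conj_re,
    conj_im, zero_re, re_ofNat] at hre ⊢
  linarith

theorem grover_card_le_four_of_norm_eq {m : ℕ} {r t : ℂ} (hrt : ‖r‖ = ‖t‖)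
    (hnorm : (m : ℝ) * ‖t‖ ^ 2 = 1) (hre : ((m : ℝ) - 2) * ‖t‖ ^ 2 + 2 * (conj r * t).re = 0) :
    m ≤ 4 := by
  have hpos : 0 < ‖t‖ ^ 2 := (sq_nonneg _).lt_of_ne (by rintro h; simp [← h] at hnorm)
  have hbound := (abs_le.mp (hrt ▸ Complex.abs_re_conj_mul_le r t)).1
  have : ((m : ℝ) - 4) * ‖t‖ ^ 2 ≤ 0 := by nlinarith
  exact_mod_cast (sub_nonpos.mp (nonpos_of_mul_nonpos_left this hpos) : (m : ℝ) ≤ 4)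

theorem grover_balanced_classification_general (d : ℕ) (m : ℕ) (hm : m = 2 * d)
    (r t : ℂ)
    (h1 : ‖r‖ ^ 2 + ((m : ℝ) - 1) * ‖t‖ ^ 2 = 1)
    (h2 : ((m : ℂ) - 2) * ((‖t‖ ^ 2 : ℝ) : ℂ) + conj r * t + r * conj t = 0)
    (hrt : ‖r‖ = ‖t‖) :
    (m = 2 ∧ ‖r‖ = 1 / Real.sqrt 2 ∧ (conj r * t).re = 0) ∨
      (m = 4 ∧ ‖r‖ = 1 / 2 ∧ t = -r) := by
  have hnorm : (m : ℝ) * ‖t‖ ^ 2 = 1 := by rw [hrt] at h1; linarith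
  have hre := grover_unitarity_re h2
  have hm0 : m ≠ 0 := by rintro rfl; simp at hnorm
  have hm4 := grover_card_le_four_of_norm_eq hrt hnorm hre
  obtain rfl | rfl : d = 1 ∨ d = 2 := by omega
  all_goals (subst hm; push_cast at hnorm hre)
  · have hr : ‖r‖ ^ 2 = 1 / 2 := by rw [hrt]; linarith
    refine .inl ⟨rfl, ?_, by linarith⟩
    rw [← Real.sqrt_sq (norm_nonneg r), hr, one_div, Real.sqrt_inv, one_div]
  · have hr : ‖r‖ ^ 2 = (1 / 2) ^ 2 := by rw [hrt]; linarith
    refine .inr ⟨rfl, (pow_left_inj₀ (norm_nonneg r) (by norm_num) two_ne_zero).mp hr, ?_⟩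
    exact Complex.eq_neg_of_re_conj_mul_eq_neg hrt (by linarith)

/-- Only in dimensions `d = 1` (`m = 2`) and `d = 2` (`m = 4`) can a unitary generalized
Grover coin `G_{r,t}` satisfy `|r| = |t|`: then either `m = 2`, `|r| = 1/√2` and the
phases of `r` and `t` differ by `π/2 (mod π)` (i.e. `Re(r̄ t) = 0`), or `m = 4`,
`|r| = 1/2` and `t = -r`. -/
theorem grover_balanced_classification (d : ℕ) (hd : 1 ≤ d) (m : ℕ) (hm : m = 2 * d)
    (r t : ℂ)
    (h1 : ‖r‖ ^ 2 + ((m : ℝ) - 1) * ‖t‖ ^ 2 = 1)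
    (h2 : ((m : ℂ) - 2) * ((‖t‖ ^ 2 : ℝ) : ℂ) + conj r * t + r * conj t = 0)
    (hrt : ‖r‖ = ‖t‖) :
    (m = 2 ∧ ‖r‖ = 1 / Real.sqrt 2 ∧ (conj r * t).re = 0) ∨
      (m = 4 ∧ ‖r‖ = 1 / 2 ∧ t = -r) :=
  grover_balanced_classification_general d m hm r t h1 h2 hrt
end
end
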